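/- Let Σ be a signed graph on n vertices and let (Π₁,...,Π_n) and (Π'₁,...,Π'_n) be two lists of rooted signed graphs such that for each i, χ(Π_i,λ) = χ(Π'_i,λ) and χ(Π_i − r_i, λ) = χ(Π'_i − r'_i, λ). Then the rooted products Σ[Π₁,...,Π_n] and Σ[Π'₁,...,Π'_n] are cospectral. -/

import Mathlib

/-!
Write `χ` for the characteristic polynomial. At every `t` where no `χ(B i)` vanishes,
`t - Σ[Π]` is the invertible block diagonal matrix `diag(t - B i)` plus a coupling supported on
the roots, so the matrix determinant lemma reduces its determinant to an `n × n` one. The only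
entries of `(t - B i)⁻¹` that enter are the root entries `χ(B i - r i)(t) / χ(B i)(t)`, so
`χ(Σ[Π])` is the determinant of the matrix with diagonal `χ(B i)` and off-diagonal entries
`-A i j * χ(B i - r i)`.
-/

open Polynomial Matrix

theorem Polynomial.eq_of_eval_eq_of_eval_ne_zero {R : Type*} [CommRing R] [IsDomain R]
    [Infinite R] {p q f : R[X]} (hf : f ≠ 0) (h : ∀ t, f.eval t ≠ 0 → p.eval t = q.eval t) :
    p = q :=
  eq_of_infinite_eval_eq p q <| (finite_setOfPred_isRoot hf).infinite_compl.mono fun t ht => h t ht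

namespace Matrix

section CommRing

variable {R : Type*} [CommRing R]

theorem det_blockDiagonal' {ι : Type*} [Fintype ι] [DecidableEq ι] {κ : ι → Type*}
    [∀ i, Fintype (κ i)] [∀ i, DecidableEq (κ i)] (M : ∀ i, Matrix (κ i) (κ i) R) :
    (blockDiagonal' M).det = ∏ i, (M i).det := by
  let _ : LinearOrder ι := LinearOrder.lift' _ (Fintype.equivFin ι).injective
  rw [(blockTriangular_blockDiagonal' M).det_fintype]
  refine Finset.prod_congr rfl fun i _ => ?_
  let e : κ i ≃ {x : Σ i, κ i // x.1 = i} :=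
    ⟨fun a => ⟨⟨i, a⟩, rfl⟩, fun x => x.2 ▸ x.1.2, fun _ => rfl,
      by rintro ⟨⟨_, _⟩, rfl⟩; rfl⟩
  rw [← det_submatrix_equiv_self e]
  congr 1
  ext a b
  simp [e, toSquareBlock, toSquareBlockProp]

theorem inv_blockDiagonal' {ι : Type*} [Fintype ι] [DecidableEq ι] {κ : ι → Type*}
    [∀ i, Fintype (κ i)] [∀ i, DecidableEq (κ i)] (M : ∀ i, Matrix (κ i) (κ i) R)
    (hM : ∀ i, IsUnit (M i).det) :
    (blockDiagonal' M)⁻¹ = blockDiagonal' fun i => (M i)⁻¹ := by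
  refine inv_eq_left_inv ?_
  rw [← blockDiagonal'_mul]
  simp only [nonsing_inv_mul _ (hM _)]
  exact blockDiagonal'_one

variable {n : Type*} [DecidableEq n]

def deleteRowCol (A : Matrix n n R) (i : n) : Matrix {j // j ≠ i} {j // j ≠ i} R :=
  A.submatrix Subtype.val Subtype.val

theorem deleteRowCol_scalar_sub [Fintype n] (A : Matrix n n R) (i : n) (t : R) :
    (scalar n t - A).deleteRowCol i = scalar _ t - A.deleteRowCol i := by
  ext a b
  simp [deleteRowCol, diagonal_apply, Subtype.ext_iff]

theorem adjugate_apply_self [Fintype n] (A : Matrix n n R) (i : n) :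
    adjugate A i i = (A.deleteRowCol i).det := by
  let _ : Unique {j // j = i} := ⟨⟨⟨i, rfl⟩⟩, by rintro ⟨_, rfl⟩; rfl⟩
  let e := Equiv.sumCompl (· = i)
  rw [adjugate_apply, ← det_submatrix_equiv_self e]
  have hblock : (A.updateRow i (Pi.single i 1)).submatrix e e
      = fromBlocks 1 0 (of fun (a : {j // j ≠ i}) (_ : {j // j = i}) => A a i)
          (A.deleteRowCol i) := by
    ext (⟨_, rfl⟩ | a) (⟨_, rfl⟩ | b)
    · simp [e]
    · simp [e, Pi.single_eq_of_ne b.2]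
    · simp [e, deleteRowCol, updateRow_ne a.2]
    · simp [e, deleteRowCol, updateRow_ne a.2]
  rw [hblock, det_fromBlocks_zero₁₂, det_one, one_mul]

end CommRing

theorem inv_apply_self {K : Type*} [Field K] {n : Type*} [Fintype n] [DecidableEq n]
    (A : Matrix n n K) (i : n) : A⁻¹ i i = (A.deleteRowCol i).det / A.det := by
  rw [inv_def, smul_apply, adjugate_apply_self, Ring.inverse_eq_inv', smul_eq_mul,
    div_eq_inv_mul]

end Matrix

section RootedProduct

variable {ι : Type*} [DecidableEq ι] {κ : ι → Type*} [∀ i, DecidableEq (κ i)] {R : Type*}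

def rootRows (R : Type*) [Zero R] [One R] (r : ∀ i, κ i) : Matrix ι (Σ i, κ i) R :=
  (1 : Matrix (Σ i, κ i) (Σ i, κ i) R).submatrix (fun i => ⟨i, r i⟩) id

/-- The adjacency matrix of the rooted product of the graph with adjacency matrix `A` (whose
diagonal is ignored) with the rooted graphs `(B i, r i)`. -/
def rootedProduct [Zero R] (A : Matrix ι ι R) (B : ∀ i, Matrix (κ i) (κ i) R)
    (r : ∀ i, κ i) : Matrix (Σ i, κ i) (Σ i, κ i) R :=
  of fun x y =>
    if h : x.1 = y.1 then B x.1 x.2 (cast (congrArg κ h.symm) y.2)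
    else if x.2 = r x.1 ∧ y.2 = r y.1 then A x.1 y.1 else 0

theorem rootRows_apply_self [Semiring R] (r : ∀ i, κ i) (j : ι) (b : κ j) :
    rootRows R r j ⟨j, b⟩ = if b = r j then 1 else 0 := by
  simp [rootRows, one_apply, eq_comm]

theorem rootRows_apply_of_ne [Semiring R] (r : ∀ i, κ i) {k j : ι} (b : κ j) (h : k ≠ j) :
    rootRows R r k ⟨j, b⟩ = 0 :=
  one_apply_ne fun he => h (congrArg Sigma.fst he)

variable [Fintype ι]

theorem transpose_rootRows_mul_mul_apply [Semiring R] (r : ∀ i, κ i) (C : Matrix ι ι R)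
    (i j : ι) (a : κ i) (b : κ j) :
    ((rootRows R r)ᵀ * C * rootRows R r) ⟨i, a⟩ ⟨j, b⟩
      = if a = r i ∧ b = r j then C i j else 0 := by
  have hrow : ((rootRows R r)ᵀ * C) ⟨i, a⟩ j = rootRows R r i ⟨i, a⟩ * C i j :=
    Fintype.sum_eq_single i fun k hk => by
      simp only [transpose_apply, rootRows_apply_of_ne r a hk, zero_mul]
  rw [mul_apply, Fintype.sum_eq_single j fun k hk => by
      simp only [rootRows_apply_of_ne r b hk, mul_zero],
    hrow, rootRows_apply_self, rootRows_apply_self]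
  split_ifs <;> simp_all

theorem rootedProduct_eq_blockDiagonal'_add [Ring R] (A : Matrix ι ι R)
    (B : ∀ i, Matrix (κ i) (κ i) R) (r : ∀ i, κ i) :
    rootedProduct A B r
      = blockDiagonal' B + (rootRows R r)ᵀ * (A - diagonal A.diag) * rootRows R r := by
  ext ⟨i, a⟩ ⟨j, b⟩
  rw [Matrix.add_apply, transpose_rootRows_mul_mul_apply]
  by_cases hij : i = j
  · subst hij
    simp [rootedProduct, blockDiagonal'_apply_eq]
  · simp [rootedProduct, blockDiagonal'_apply_ne _ _ _ hij, hij]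

variable [∀ i, Fintype (κ i)]

theorem rootRows_mul [Semiring R] (r : ∀ i, κ i) {n : Type*} (M : Matrix (Σ i, κ i) n R) :
    rootRows R r * M = M.submatrix (fun i => ⟨i, r i⟩) id := by
  ext i j
  simp [rootRows, mul_apply, one_apply]

theorem mul_transpose_rootRows [Semiring R] (r : ∀ i, κ i) {n : Type*}
    (M : Matrix n (Σ i, κ i) R) :
    M * (rootRows R r)ᵀ = M.submatrix id (fun i => ⟨i, r i⟩) := by
  ext i j
  simp [rootRows, mul_apply, one_apply]

theorem det_blockDiagonal'_add_transpose_rootRows_mul_mul {K : Type*} [Field K]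
    (D : ∀ i, Matrix (κ i) (κ i) K) (r : ∀ i, κ i) (C : Matrix ι ι K)
    (hD : ∀ i, (D i).det ≠ 0) :
    (blockDiagonal' D + (rootRows K r)ᵀ * C * rootRows K r).det
      = (diagonal (fun i => (D i).det)
          + diagonal (fun i => ((D i).deleteRowCol (r i)).det) * C).det := by
  have hunit : IsUnit (blockDiagonal' D).det := by
    simpa [det_blockDiagonal', Finset.prod_ne_zero_iff] using hD
  -- `det (D + Uᵀ C U) = det D * det (1 + U D⁻¹ Uᵀ C)`, and `U D⁻¹ Uᵀ` is diagonal.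
  have hroots : rootRows K r * (blockDiagonal' D)⁻¹ * (rootRows K r)ᵀ
      = diagonal fun i => ((D i).deleteRowCol (r i)).det / (D i).det := by
    ext i j
    rw [mul_transpose_rootRows, rootRows_mul, inv_blockDiagonal' D fun i => (hD i).isUnit]
    by_cases hij : i = j
    · subst hij
      simp [blockDiagonal'_apply_eq, inv_apply_self]
    · simp [blockDiagonal'_apply_ne _ _ _ hij, hij]
  rw [det_add_mul _ _ hunit, ← Matrix.mul_assoc, hroots, det_blockDiagonal', ← det_diagonal,
    ← det_mul, Matrix.mul_add, Matrix.mul_one, ← Matrix.mul_assoc, diagonal_mul_diagonal]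
  congr 4
  funext i
  exact mul_div_cancel₀ _ (hD i)

theorem charpoly_rootedProduct {K : Type*} [Field K] [Infinite K] (A : Matrix ι ι K)
    (B : ∀ i, Matrix (κ i) (κ i) K) (r : ∀ i, κ i) :
    (rootedProduct A B r).charpoly
      = (of fun i j => if i = j then (B i).charpoly
          else -(C (A i j) * ((B i).deleteRowCol (r i)).charpoly)).det := by
  refine eq_of_eval_eq_of_eval_ne_zero (f := ∏ i, (B i).charpoly)
    (monic_prod_of_monic _ _ fun i _ => charpoly_monic _).ne_zero fun t ht => ?_
  have hB : ∀ i, (scalar (κ i) t - B i).det ≠ 0 := by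
    rw [eval_prod, Finset.prod_ne_zero_iff] at ht
    exact fun i => eval_charpoly (B i) t ▸ ht i (Finset.mem_univ i)
  have hdecomp : scalar _ t - rootedProduct A B r
      = blockDiagonal' ((fun i => scalar (κ i) t) - B)
        + (rootRows K r)ᵀ * -(A - diagonal A.diag) * rootRows K r := by
    have hscalar : scalar (Σ i, κ i) t = blockDiagonal' fun i => scalar (κ i) t := by
      simp [scalar_apply, blockDiagonal'_diagonal]
    rw [rootedProduct_eq_blockDiagonal'_add, hscalar, Matrix.mul_neg, Matrix.neg_mul,
      blockDiagonal'_sub]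
    abel
  rw [eval_charpoly, hdecomp, det_blockDiagonal'_add_transpose_rootRows_mul_mul (_ - B) _ _ hB,
    ← coe_evalRingHom, RingHom.map_det]
  congr 1
  ext i j
  simp only [Pi.sub_apply, deleteRowCol_scalar_sub, ← eval_charpoly]
  by_cases hij : i = j
  · subst hij
    simp
  · simp [hij, mul_comm]

end RootedProduct

/-- If (Π₁,…,Π_n) and (Π'₁,…,Π'_n) are lists of rooted signed graphs such that
for each i, χ(Π_i) = χ(Π'_i) and χ(Π_i − r_i) = χ(Π'_i − r'_i), then the rooted
products Σ[Π₁,…,Π_n] and Σ[Π'₁,…,Π'_n] are cospectral. -/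
theorem rooted_product_lists_cospectral (n : ℕ)
    (AS : Matrix (Fin n) (Fin n) ℝ)
    (m : Fin n → ℕ)
    (Bm Bm' : (i : Fin n) → Matrix (Fin (m i)) (Fin (m i)) ℝ)
    (r r' : (i : Fin n) → Fin (m i))
    (hcos : ∀ i, (Bm i).charpoly = (Bm' i).charpoly)
    (hcosdel : ∀ i,
      ((Bm i).submatrix (fun a : {a : Fin (m i) // a ≠ r i} => (a : Fin (m i)))
        (fun a : {a : Fin (m i) // a ≠ r i} => (a : Fin (m i)))).charpoly
      = ((Bm' i).submatrix (fun a : {a : Fin (m i) // a ≠ r' i} => (a : Fin (m i)))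
        (fun a : {a : Fin (m i) // a ≠ r' i} => (a : Fin (m i)))).charpoly)
    (R R' : Matrix ((i : Fin n) × Fin (m i)) ((i : Fin n) × Fin (m i)) ℝ)
    (hR : ∀ x y : (i : Fin n) × Fin (m i), R x y =
      if h : x.1 = y.1 then
        Bm x.1 x.2 (cast (congrArg (fun t => Fin (m t)) h.symm) y.2)
      else if x.2 = r x.1 ∧ y.2 = r y.1 then AS x.1 y.1 else 0)
    (hR' : ∀ x y : (i : Fin n) × Fin (m i), R' x y =
      if h : x.1 = y.1 then
        Bm' x.1 x.2 (cast (congrArg (fun t => Fin (m t)) h.symm) y.2)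
      else if x.2 = r' x.1 ∧ y.2 = r' y.1 then AS x.1 y.1 else 0) :
    R.charpoly = R'.charpoly := by
  have hdel : ∀ i,
      ((Bm i).deleteRowCol (r i)).charpoly = ((Bm' i).deleteRowCol (r' i)).charpoly := hcosdel
  rw [show R = rootedProduct AS Bm r from ext hR, show R' = rootedProduct AS Bm' r' from ext hR',
    charpoly_rootedProduct, charpoly_rootedProduct]
  simp only [hcos, hdel]
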